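/- Let A be an n×n real matrix with ‖A‖₂ < 1, let e₁, …, e_k ∈ ℝⁿ, and define E_{j+1} = (A − I)(Σ_{i=1}^{j} A^{j−i} e_i) + e_{j+1} for j = 0, …, k−1. Then each column satisfies ‖E_{j+1}‖₂ ≤ (1 + ‖I − A‖₂) · max_{i=1,…,j+1} ‖e_i‖₂ / (1 − ‖A‖₂), and the matrix E = [E₁, …, E_k] ∈ ℝ^{n×k} satisfies ‖E‖₂ ≤ √k · (1 + ‖I − A‖₂) · max_{i=1,…,k} ‖e_i‖₂ / (1 − ‖A‖₂). -/

import Mathlib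

/-!
Write `S_j = ∑_{i=1}^{j} A^{j-i} e_i` and `m = max_{i ≤ j+1} ‖e_i‖`. Since `‖A^t v‖ ≤ ‖A‖^t ‖v‖`,
the geometric series gives `‖S_j‖ ≤ m / (1 - ‖A‖)`, so
`‖E_{j+1}‖ ≤ ‖I - A‖ ‖S_j‖ + m ≤ (1 + ‖I - A‖) m / (1 - ‖A‖)`.
For the matrix, `E x = ∑_j x_j E_j`, and if every column has norm at most `B` then by
Cauchy–Schwarz `‖E x‖ ≤ B ∑_j |x_j| ≤ √k B ‖x‖`.
-/

open scoped Matrix.Norms.L2Operator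
open Matrix

/-- The Euclidean (ℓ₂) norm of a vector in `ℝⁿ`. -/
noncomputable def euclNorm {n : ℕ} (v : Fin n → ℝ) : ℝ := Real.sqrt (∑ i, v i ^ 2)

open Finset WithLp

lemma EuclideanSpace.sum_norm_le_sqrt_card_mul_norm {𝕜 ι : Type*} [RCLike 𝕜] [Fintype ι]
    (x : EuclideanSpace 𝕜 ι) : ∑ i, ‖x i‖ ≤ √(Fintype.card ι) * ‖x‖ := by
  have hsq : (∑ i, ‖x i‖) ^ 2 ≤ Fintype.card ι * ∑ i, ‖x i‖ ^ 2 :=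
    sq_sum_le_card_mul_sum_sq
  rw [EuclideanSpace.norm_eq, ← Real.sqrt_mul (by positivity)]
  exact Real.le_sqrt_of_sq_le hsq

lemma Matrix.l2_opNorm_le_sqrt_card_mul_of_norm_col_le {𝕜 m n : Type*} [RCLike 𝕜]
    [Fintype m] [Fintype n] [DecidableEq n] (M : Matrix m n 𝕜) {B : ℝ} (hB : 0 ≤ B)
    (hcol : ∀ j, ‖toLp 2 (Mᵀ j)‖ ≤ B) :
    ‖M‖ ≤ √(Fintype.card n) * B := by
  rw [l2_opNorm_def]
  refine ContinuousLinearMap.opNorm_le_bound _ (by positivity) fun x => ?_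
  have hcomb : (toEuclideanLin.trans LinearMap.toContinuousLinearMap M) x
      = ∑ j, x j • toLp 2 (Mᵀ j) := by
    ext i
    simp [mulVec, dotProduct, mul_comm]
  calc ‖(toEuclideanLin.trans LinearMap.toContinuousLinearMap M) x‖
      ≤ ∑ j, ‖x j‖ * ‖toLp 2 (Mᵀ j)‖ := by
        rw [hcomb]; exact (norm_sum_le _ _).trans_eq (by simp only [norm_smul])
    _ ≤ ∑ j, ‖x j‖ * B := by gcongr with j; exact hcol j
    _ ≤ √(Fintype.card n) * B * ‖x‖ := by
        rw [← sum_mul, mul_right_comm]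
        gcongr
        exact x.sum_norm_le_sqrt_card_mul_norm

lemma euclNorm_eq_norm_toLp {n : ℕ} (v : Fin n → ℝ) : euclNorm v = ‖toLp 2 v‖ := by
  simp [euclNorm, EuclideanSpace.norm_eq]

lemma euclNorm_nonneg {n : ℕ} (v : Fin n → ℝ) : 0 ≤ euclNorm v := Real.sqrt_nonneg _

lemma euclNorm_add_le {n : ℕ} (u v : Fin n → ℝ) :
    euclNorm (u + v) ≤ euclNorm u + euclNorm v := by
  simpa only [euclNorm_eq_norm_toLp, toLp_add] using norm_add_le (toLp 2 u) (toLp 2 v)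

lemma euclNorm_sum_le {α : Type*} {n : ℕ} (s : Finset α) (f : α → Fin n → ℝ) :
    euclNorm (∑ a ∈ s, f a) ≤ ∑ a ∈ s, euclNorm (f a) := by
  simpa only [euclNorm_eq_norm_toLp, toLp_sum] using norm_sum_le s fun a => toLp 2 (f a)

lemma euclNorm_mulVec_le {m n : ℕ} (A : Matrix (Fin m) (Fin n) ℝ) (v : Fin n → ℝ) :
    euclNorm (A *ᵥ v) ≤ ‖A‖ * euclNorm v := by
  rw [euclNorm_eq_norm_toLp, euclNorm_eq_norm_toLp]
  exact A.l2_opNorm_mulVec (toLp 2 v)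

lemma euclNorm_pow_mulVec_le {n : ℕ} (A : Matrix (Fin n) (Fin n) ℝ) (m : ℕ) (v : Fin n → ℝ) :
    euclNorm ((A ^ m) *ᵥ v) ≤ ‖A‖ ^ m * euclNorm v := by
  induction m with
  | zero => simp
  | succ m ih =>
    calc euclNorm ((A ^ (m + 1)) *ᵥ v) = euclNorm (A *ᵥ ((A ^ m) *ᵥ v)) := by
          rw [pow_succ', mulVec_mulVec]
      _ ≤ ‖A‖ * (‖A‖ ^ m * euclNorm v) := by
          grw [euclNorm_mulVec_le, ih]
      _ = ‖A‖ ^ (m + 1) * euclNorm v := by ring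

lemma sum_Icc_pow_sub_le {a : ℝ} (h0 : 0 ≤ a) (h1 : a < 1) (j : ℕ) :
    ∑ i ∈ Icc 1 j, a ^ (j - i) ≤ (1 - a)⁻¹ := by
  rw [← Finset.Ico_add_one_right_eq_Icc, sum_Ico_reflect _ _ le_rfl, Nat.sub_self, inv_eq_one_div,
    ← pow_zero a]
  exact geom_sum_Ico_le_of_lt_one h0 h1

section ErrorColumn

variable {n : ℕ} {A : Matrix (Fin n) (Fin n) ℝ} {e : ℕ → Fin n → ℝ} {M : ℝ}

lemma euclNorm_sum_pow_mulVec_le (hA : ‖A‖ < 1) {j : ℕ} (hM0 : 0 ≤ M)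
    (hM : ∀ i ∈ Icc 1 j, euclNorm (e i) ≤ M) :
    euclNorm (∑ i ∈ Icc 1 j, (A ^ (j - i)) *ᵥ e i) ≤ M / (1 - ‖A‖) :=
  calc euclNorm (∑ i ∈ Icc 1 j, (A ^ (j - i)) *ᵥ e i)
      ≤ ∑ i ∈ Icc 1 j, ‖A‖ ^ (j - i) * M := by
        refine (euclNorm_sum_le _ _).trans (sum_le_sum fun i hi => ?_)
        grw [euclNorm_pow_mulVec_le, hM i hi]
    _ = (∑ i ∈ Icc 1 j, ‖A‖ ^ (j - i)) * M := (sum_mul ..).symm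
    _ ≤ (1 - ‖A‖)⁻¹ * M := by grw [sum_Icc_pow_sub_le (norm_nonneg A) hA]
    _ = M / (1 - ‖A‖) := inv_mul_eq_div ..

lemma euclNorm_errorColumn_le (hA : ‖A‖ < 1) {j : ℕ}
    (hM : ∀ i ∈ Icc 1 (j + 1), euclNorm (e i) ≤ M) :
    euclNorm ((A - 1) *ᵥ (∑ i ∈ Icc 1 j, (A ^ (j - i)) *ᵥ e i) + e (j + 1))
      ≤ (1 + ‖(1 : Matrix (Fin n) (Fin n) ℝ) - A‖) * M / (1 - ‖A‖) := by
  have hlast : euclNorm (e (j + 1)) ≤ M := hM (j + 1) (right_mem_Icc.mpr (by omega))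
  have hM0 : 0 ≤ M := (euclNorm_nonneg _).trans hlast
  have hgap : 0 < 1 - ‖A‖ := sub_pos.mpr hA
  have hsum := euclNorm_sum_pow_mulVec_le hA hM0 fun i hi =>
    hM i (Icc_subset_Icc_right j.le_succ hi)
  calc _ ≤ ‖A - 1‖ * (M / (1 - ‖A‖)) + M := by
        grw [euclNorm_add_le, euclNorm_mulVec_le, hsum, hlast]
    _ ≤ ‖1 - A‖ * (M / (1 - ‖A‖)) + M / (1 - ‖A‖) := by
        rw [norm_sub_rev]
        gcongr
        exact le_div_self hM0 hgap (by linarith [norm_nonneg A])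
    _ = (1 + ‖1 - A‖) * M / (1 - ‖A‖) := by ring

end ErrorColumn

/-- Bounds on the columns `E_{j+1} = (A-I)(Σ_{i=1}^{j} A^{j-i} e_i) + e_{j+1}`
and on the spectral norm of the error matrix `E = [E₁, …, E_k]` when `‖A‖₂ < 1`. -/
theorem error_matrix_bound {n k : ℕ} (hk : 0 < k) (A : Matrix (Fin n) (Fin n) ℝ)
    (hA : ‖A‖ < 1) (e : ℕ → Fin n → ℝ) (E : ℕ → Fin n → ℝ)
    (hE : ∀ j : ℕ, j < k → E (j + 1) =
      (A - 1).mulVec (∑ i ∈ Finset.Icc 1 j, (A ^ (j - i)).mulVec (e i)) + e (j + 1))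
    (Emat : Matrix (Fin n) (Fin k) ℝ)
    (hEmat : ∀ (r : Fin n) (j : Fin k), Emat r j = E ((j : ℕ) + 1) r) :
    (∀ j : ℕ, j < k → euclNorm (E (j + 1)) ≤
      (1 + ‖(1 : Matrix (Fin n) (Fin n) ℝ) - A‖) *
        ((Finset.Icc 1 (j + 1)).sup' (Finset.nonempty_Icc.mpr (by omega))
          fun i => euclNorm (e i)) / (1 - ‖A‖)) ∧
    ‖Emat‖ ≤ Real.sqrt k * (1 + ‖(1 : Matrix (Fin n) (Fin n) ℝ) - A‖) *
        ((Finset.Icc 1 k).sup' (Finset.nonempty_Icc.mpr (by omega))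
          fun i => euclNorm (e i)) / (1 - ‖A‖) := by
  have hcol : ∀ j < k, ∀ M, (∀ i ∈ Icc 1 (j + 1), euclNorm (e i) ≤ M) →
      euclNorm (E (j + 1)) ≤ (1 + ‖(1 : Matrix (Fin n) (Fin n) ℝ) - A‖) * M / (1 - ‖A‖) :=
    fun j hj M hM => hE j hj ▸ euclNorm_errorColumn_le hA hM
  refine ⟨fun j hj => hcol j hj _ fun i hi => le_sup' (fun i => euclNorm (e i)) hi, ?_⟩
  set M := (Icc 1 k).sup' (nonempty_Icc.mpr (by omega)) fun i => euclNorm (e i)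
  have hM : ∀ i ∈ Icc 1 k, euclNorm (e i) ≤ M := fun i hi =>
    le_sup' (fun i => euclNorm (e i)) hi
  have hbound : 0 ≤ (1 + ‖(1 : Matrix (Fin n) (Fin n) ℝ) - A‖) * M / (1 - ‖A‖) := by
    have := (euclNorm_nonneg _).trans (hM 1 (left_mem_Icc.mpr hk))
    have := sub_pos.mpr hA
    positivity
  rw [mul_assoc, mul_div_assoc]
  refine (Emat.l2_opNorm_le_sqrt_card_mul_of_norm_col_le hbound fun j => ?_).trans_eq
    (by rw [Fintype.card_fin])
  have hcol_j : Ematᵀ j = E (j + 1) := funext fun r => hEmat r j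
  rw [hcol_j, ← euclNorm_eq_norm_toLp]
  exact hcol j j.isLt M fun i hi => hM i (Icc_subset_Icc_right (by omega) hi)
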